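/- arXiv:1605.05252 — 2 statements merged into one kernel-verified Lean document; each statement's English description precedes it below -/
import Mathlib

section
/- Boundedness on the real axis (second assertion of Lemma 2.1): for each fixed r ≥ R₀ there is a constant M > 0 such that |y(r;k)| ≤ M for all real k. -/
open scoped Real

/-- The entire extension of `z ↦ sin z / z` (value `1` at `z = 0`). -/
noncomputable def csinc (z : ℂ) : ℂ := if z = 0 then 1 else Complex.sin z / z

/-- The spherical Bessel function of the first kind of order `l`, via Rayleigh's formula
`j_l(z) = (−z)^l ((1/z)·d/dz)^l (sin z / z)`. -/
noncomputable def sphBessel (l : ℕ) (z : ℂ) : ℂ :=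
  (-z) ^ l * ((fun f : ℂ → ℂ => fun w => (1 / w) * deriv f w)^[l] csinc) z

/-!
For `|k| ≥ 1` the energy `E = |y'|² + k² n |y|²` of the radial equation satisfies
`E' = 2 (l(l+1)/r²) Re(ȳ y') + k² n' |y|² ≤ C E` with `C` independent of `k`, so by Gronwall
`min n · |y(r)|² ≤ E(r) ≤ E(R) e^{C (r - R)}`. Iterating Rayleigh's operator shows
`z j_l(z) = A(1/z) sin z + B(1/z) cos z` for polynomials `A`, `B` with `A(0)² + B(0)² = 1`;
hence `E(R) = |(z j_l)'(kR)|² + |kR j_l(kR)|²` is bounded for real `|k| ≥ 1`, while `|k| ≤ 1` is a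
compact range of a continuous function.

The derivative `deriv (y k) R` is two-sided, so where it does not exist the initial condition only
says `(z j_l)'(kR) = 0`. Such `k` have empty interior: `(z j_l)' = A₁(1/z) sin z + B₁(1/z) cos z`
is of the same form, and if it vanishes on an interval then so does its derivative
`A₂(1/z) sin z + B₂(1/z) cos z`; eliminating `sin` and `cos` gives infinitely many roots `1/x`
of `A₁ B₂ - B₁ A₂`, whose value at `0` is `A₁(0)² + B₁(0)² = 1`. Being closed in `k`, the bound
extends from this dense complement to all of `ℝ`.
-/

open Set Real Polynomial

theorem le_mul_exp_of_hasDerivAt_le_mul {E E' : ℝ → ℝ} {a b C : ℝ} (hab : a ≤ b)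
    (hE : ContinuousOn E (Icc a b)) (hE' : ∀ x ∈ Ioo a b, HasDerivAt E (E' x) x)
    (hbound : ∀ x ∈ Ioo a b, E' x ≤ C * E x) : E b ≤ E a * exp (C * (b - a)) := by
  set φ := fun x => E x * exp (-(C * x))
  have hφ' : ∀ x ∈ Ioo a b, HasDerivAt φ ((E' x - C * E x) * exp (-(C * x))) x := by
    intro x hx
    refine ((hE' x hx).mul ((hasDerivAt_id x).const_mul C).neg.exp).congr_deriv ?_
    simp only [Pi.neg_apply, id, mul_one]
    ring
  have hanti : AntitoneOn φ (Icc a b) := by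
    refine antitoneOn_of_deriv_nonpos (convex_Icc a b) (hE.mul (by fun_prop)) ?_ ?_ <;>
      rw [interior_Icc]
    · exact fun x hx => (hφ' x hx).differentiableAt.differentiableWithinAt
    · intro x hx
      rw [(hφ' x hx).deriv]
      exact mul_nonpos_of_nonpos_of_nonneg (sub_nonpos.2 (hbound x hx)) (exp_pos _).le
  calc E b = φ b * exp (C * b) := by simp [φ, mul_assoc, ← exp_add]
    _ ≤ φ a * exp (C * b) := by
      gcongr
      exact hanti (left_mem_Icc.2 hab) (right_mem_Icc.2 hab) hab
    _ = E a * exp (C * (b - a)) := by simp only [φ, mul_assoc, ← exp_add]; congr 2; ring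

section Energy

variable {F : Type*} [NormedAddCommGroup F] [InnerProductSpace ℝ F]

theorem hasDerivAt_energy {u v : ℝ → F} {w : ℝ → ℝ} {q w' r : ℝ}
    (hu : HasDerivAt u (v r) r) (hv : HasDerivAt v ((q - w r) • u r) r)
    (hw : HasDerivAt w w' r) :
    HasDerivAt (fun t => ‖v t‖ ^ 2 + w t * ‖u t‖ ^ 2)
      (2 * q * inner ℝ (u r) (v r) + w' * ‖u r‖ ^ 2) r := by
  refine (hv.norm_sq.add (hw.mul hu.norm_sq)).congr_deriv ?_
  rw [real_inner_smul_right, real_inner_comm]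
  ring

theorem energy_deriv_le {u v : F} {q w w' m Q K : ℝ} (hm : 0 < m) (hw : m ≤ w)
    (hq : |q| ≤ Q) (hw' : |w'| ≤ K * w) :
    2 * q * inner ℝ u v + w' * ‖u‖ ^ 2 ≤ (Q + Q / m + K) * (‖v‖ ^ 2 + w * ‖u‖ ^ 2) := by
  have hQ : 0 ≤ Q := (abs_nonneg q).trans hq
  have hK : 0 ≤ K := nonneg_of_mul_nonneg_left ((abs_nonneg _).trans hw') (hm.trans_le hw)
  have hinner : 2 * q * inner ℝ u v ≤ Q * (‖u‖ ^ 2 + ‖v‖ ^ 2) :=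
    calc 2 * q * inner ℝ u v ≤ |q| * (2 * |inner ℝ u v|) := by
          rw [mul_comm 2 q, mul_assoc]
          exact (le_abs_self _).trans (by rw [abs_mul, abs_mul, abs_two])
      _ ≤ Q * (‖u‖ ^ 2 + ‖v‖ ^ 2) := by
          gcongr
          nlinarith [abs_real_inner_le_norm u v, sq_nonneg (‖u‖ - ‖v‖)]
  have hwu : 0 ≤ w * ‖u‖ ^ 2 := by have := hm.trans_le hw; positivity
  have hw'u : w' * ‖u‖ ^ 2 ≤ K * (w * ‖u‖ ^ 2) := by
    nlinarith [(le_abs_self w').trans hw', sq_nonneg ‖u‖]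
  have hQu : Q * ‖u‖ ^ 2 ≤ Q / m * (w * ‖u‖ ^ 2) := by
    rw [div_mul_eq_mul_div, le_div_iff₀ hm]
    nlinarith [mul_le_mul_of_nonneg_right hw (sq_nonneg ‖u‖)]
  linarith [mul_nonneg hQ hwu, mul_nonneg (div_nonneg hQ hm.le) (sq_nonneg ‖v‖),
    mul_nonneg hK (sq_nonneg ‖v‖)]

theorem norm_sq_le_energy_mul_exp {u v : ℝ → F} {q w w' : ℝ → ℝ} {a b m Q K : ℝ} (hab : a ≤ b)
    (hu : ContinuousOn u (Icc a b)) (hv : ContinuousOn v (Icc a b))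
    (hw : ContinuousOn w (Icc a b)) (hu' : ∀ r ∈ Ioo a b, HasDerivAt u (v r) r)
    (hv' : ∀ r ∈ Ioo a b, HasDerivAt v ((q r - w r) • u r) r)
    (hw' : ∀ r ∈ Ioo a b, HasDerivAt w (w' r) r) (hm : 0 < m) (hwm : ∀ r ∈ Icc a b, m ≤ w r)
    (hq : ∀ r ∈ Ioo a b, |q r| ≤ Q) (hK : ∀ r ∈ Ioo a b, |w' r| ≤ K * w r) :
    m * ‖u b‖ ^ 2 ≤ (‖v a‖ ^ 2 + w a * ‖u a‖ ^ 2) * exp ((Q + Q / m + K) * (b - a)) := by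
  have hE := le_mul_exp_of_hasDerivAt_le_mul hab (by fun_prop)
    (fun r hr => hasDerivAt_energy (hu' r hr) (hv' r hr) (hw' r hr))
    (fun r hr => energy_deriv_le hm (hwm r (Ioo_subset_Icc_self hr)) (hq r hr) (hK r hr))
  have hmb : m * ‖u b‖ ^ 2 ≤ w b * ‖u b‖ ^ 2 := by gcongr; exact hwm b (right_mem_Icc.2 hab)
  nlinarith [sq_nonneg ‖v b‖]

theorem ContDiffOn.hasDerivAt_derivWithin_Icc {u : ℝ → F} {a b r : ℝ}
    (hu : ContDiffOn ℝ 2 u (Icc a b)) (hr : r ∈ Ioo a b) :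
    HasDerivAt u (derivWithin u (Icc a b) r) r ∧
      HasDerivAt (derivWithin u (Icc a b)) (deriv (deriv u) r) r := by
  have hIoo : ContDiffOn ℝ 2 u (Ioo a b) := hu.mono Ioo_subset_Icc_self
  have hderiv : derivWithin u (Icc a b) =ᶠ[nhds r] deriv u :=
    Filter.eventually_of_mem (isOpen_Ioo.mem_nhds hr)
      fun t ht => derivWithin_of_mem_nhds (Icc_mem_nhds ht.1 ht.2)
  refine ⟨?_, ?_⟩
  · rw [hderiv.eq_of_nhds]
    exact ((hIoo.differentiableOn two_ne_zero).differentiableAt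
      (isOpen_Ioo.mem_nhds hr)).hasDerivAt
  · refine HasDerivAt.congr_of_eventuallyEq ?_ hderiv
    have hderiv' : ContDiffOn ℝ 1 (deriv u) (Ioo a b) := hIoo.deriv_of_isOpen isOpen_Ioo le_rfl
    exact ((hderiv'.differentiableOn one_ne_zero).differentiableAt
      (isOpen_Ioo.mem_nhds hr)).hasDerivAt

theorem exists_norm_sq_le_radial_energy {R r₀ : ℝ} (hR : 0 < R) (hRr₀ : R < r₀) {n : ℝ → ℝ}
    (hn : ContDiffOn ℝ 1 n (Icc R r₀)) (hnpos : ∀ r ∈ Icc R r₀, 0 < n r) (L : ℝ) :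
    ∃ C, 0 ≤ C ∧ ∀ k : ℝ, 1 ≤ |k| → ∀ u : ℝ → F, ContDiffOn ℝ 2 u (Icc R r₀) →
      (∀ r ∈ Ioo R r₀, deriv (deriv u) r = (L / r ^ 2 - k ^ 2 * n r) • u r) →
      ‖u r₀‖ ^ 2 ≤ C * (‖derivWithin u (Icc R r₀) R‖ ^ 2 + k ^ 2 * n R * ‖u R‖ ^ 2) := by
  obtain ⟨rmin, hrmin, hmin⟩ := isCompact_Icc.exists_isMinOn (nonempty_Icc.2 hRr₀.le)
    hn.continuousOn
  have hnmin := hnpos rmin hrmin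
  obtain ⟨N', hN'⟩ := isCompact_Icc.exists_bound_of_continuousOn
    (hn.continuousOn_derivWithin (uniqueDiffOn_Icc hRr₀) le_rfl)
  have hn' : ∀ r ∈ Ioo R r₀, HasDerivAt n (derivWithin n (Icc R r₀) r) r := fun r hr =>
    ((hn.differentiableOn one_ne_zero r (Ioo_subset_Icc_self hr)).differentiableAt
      (Icc_mem_nhds hr.1 hr.2)).hasDerivAt.congr_deriv
      (derivWithin_of_mem_nhds (Icc_mem_nhds hr.1 hr.2)).symm
  refine ⟨exp ((|L| / R ^ 2 + |L| / R ^ 2 / n rmin + N' / n rmin) * (r₀ - R)) / n rmin,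
    by positivity, fun k hk u hu hode => ?_⟩
  have hk2 : 1 ≤ k ^ 2 := by nlinarith [sq_abs k]
  have hE := norm_sq_le_energy_mul_exp (q := fun r => L / r ^ 2) (w := fun r => k ^ 2 * n r)
    (Q := |L| / R ^ 2) (K := N' / n rmin) hRr₀.le hu.continuousOn
    (hu.continuousOn_derivWithin (uniqueDiffOn_Icc hRr₀) one_le_two)
    (continuousOn_const.mul hn.continuousOn) (fun r hr => (hu.hasDerivAt_derivWithin_Icc hr).1)
    (fun r hr => hode r hr ▸ (hu.hasDerivAt_derivWithin_Icc hr).2)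
    (fun r hr => (hn' r hr).const_mul (k ^ 2)) hnmin ?_ ?_ ?_
  · rw [div_mul_eq_mul_div, le_div_iff₀ hnmin]
    linarith
  · intro r hr
    have : n rmin ≤ n r := hmin hr
    nlinarith [mul_nonneg (sub_nonneg.2 hk2) (hnpos r hr).le]
  · intro r hr
    have hr0 : 0 < r := hR.trans hr.1
    rw [abs_div, abs_of_pos (by positivity : 0 < r ^ 2)]
    gcongr
    exact hr.1.le
  · intro r hr
    have hr' := Ioo_subset_Icc_self hr
    have hnr : n rmin ≤ n r := hmin hr'
    have hbound : |derivWithin n (Icc R r₀) r| ≤ N' := hN' r hr'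
    have hN'0 : 0 ≤ N' := (abs_nonneg _).trans hbound
    rw [abs_mul, abs_of_nonneg (sq_nonneg k), div_mul_eq_mul_div, le_div_iff₀ hnmin]
    nlinarith [mul_le_mul hbound hnr hnmin.le hN'0]

end Energy

noncomputable def sinCosInvPoly (A B : ℂ[X]) (z : ℂ) : ℂ :=
  A.eval z⁻¹ * Complex.sin z + B.eval z⁻¹ * Complex.cos z

noncomputable def sinCoeffDeriv (A B : ℂ[X]) : ℂ[X] := -(X ^ 2 * derivative A) - B

noncomputable def cosCoeffDeriv (A B : ℂ[X]) : ℂ[X] := A - X ^ 2 * derivative B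

@[simp] theorem eval_zero_sinCoeffDeriv (A B : ℂ[X]) :
    (sinCoeffDeriv A B).eval 0 = -B.eval 0 := by
  simp [sinCoeffDeriv]

@[simp] theorem eval_zero_cosCoeffDeriv (A B : ℂ[X]) :
    (cosCoeffDeriv A B).eval 0 = A.eval 0 := by
  simp [cosCoeffDeriv]

theorem hasDerivAt_sinCosInvPoly (A B : ℂ[X]) {z : ℂ} (hz : z ≠ 0) :
    HasDerivAt (sinCosInvPoly A B)
      (sinCosInvPoly (sinCoeffDeriv A B) (cosCoeffDeriv A B) z) z := by
  have hinv := hasDerivAt_inv hz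
  have hA := (A.hasDerivAt z⁻¹).comp z hinv
  have hB := (B.hasDerivAt z⁻¹).comp z hinv
  refine ((hA.mul (Complex.hasDerivAt_sin z)).add
    (hB.mul (Complex.hasDerivAt_cos z))).congr_deriv ?_
  simp only [sinCosInvPoly, sinCoeffDeriv, cosCoeffDeriv, eval_sub, eval_neg, eval_mul,
    eval_pow, eval_X, inv_pow, Function.comp_apply]
  ring

theorem sinCosInvPoly_X_mul (A B : ℂ[X]) (z : ℂ) :
    sinCosInvPoly (X * A) (X * B) z = z⁻¹ * sinCosInvPoly A B z := by
  simp only [sinCosInvPoly, eval_mul, eval_X]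
  ring

theorem sinCosInvPoly_smul (c : ℂ) (A B : ℂ[X]) (z : ℂ) :
    sinCosInvPoly (c • A) (c • B) z = c * sinCosInvPoly A B z := by
  simp only [sinCosInvPoly, eval_smul, smul_eq_mul]
  ring

theorem sinCosInvPoly_sub (A B A' B' : ℂ[X]) (z : ℂ) :
    sinCosInvPoly (A - A') (B - B') z = sinCosInvPoly A B z - sinCosInvPoly A' B' z := by
  simp only [sinCosInvPoly, eval_sub]
  ring

noncomputable def rayleighOp (f : ℂ → ℂ) (w : ℂ) : ℂ := (1 / w) * deriv f w

theorem exists_rayleighOp_iterate_csinc (l : ℕ) :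
    ∃ A B : ℂ[X], A.eval 0 ^ 2 + B.eval 0 ^ 2 = 1 ∧
      ∀ z ≠ 0, (rayleighOp^[l] csinc) z = z⁻¹ ^ (l + 1) * sinCosInvPoly A B z := by
  induction l with
  | zero =>
    refine ⟨1, 0, by simp, fun z hz => ?_⟩
    simp [csinc, hz, sinCosInvPoly, div_eq_inv_mul]
  | succ l ih =>
    obtain ⟨A, B, hAB, hf⟩ := ih
    -- `(1/z) (z^{-(l+1)} W)' = z^{-(l+2)} (W' - (l+1) W / z)`
    refine ⟨sinCoeffDeriv A B - (l + 1 : ℂ) • (X * A), cosCoeffDeriv A B - (l + 1 : ℂ) • (X * B),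
      by simp; linear_combination hAB, fun z hz => ?_⟩
    have hev : rayleighOp^[l] csinc =ᶠ[nhds z] fun w => w⁻¹ ^ (l + 1) * sinCosInvPoly A B w :=
      Filter.eventually_of_mem (isOpen_ne.mem_nhds hz) hf
    have hderiv := ((hasDerivAt_inv hz).fun_pow (l + 1)).fun_mul (hasDerivAt_sinCosInvPoly A B hz)
    rw [Function.iterate_succ_apply', rayleighOp, hev.deriv_eq, hderiv.deriv, sinCosInvPoly_sub,
      sinCosInvPoly_smul, sinCosInvPoly_X_mul, Nat.add_sub_cancel]
    simp only [inv_pow, pow_succ]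
    push_cast
    field_simp
    ring

theorem sphBessel_eq_neg_pow_mul_rayleighOp_iterate (l : ℕ) (z : ℂ) :
    sphBessel l z = (-z) ^ l * (rayleighOp^[l] csinc) z :=
  rfl

theorem exists_sinCosInvPoly_sphBessel (l : ℕ) :
    ∃ A B : ℂ[X], A.eval 0 ^ 2 + B.eval 0 ^ 2 = 1 ∧ ∀ z ≠ 0,
      z * sphBessel l z = sinCosInvPoly A B z ∧
      sphBessel l z + z * deriv (sphBessel l) z =
        sinCosInvPoly (sinCoeffDeriv A B) (cosCoeffDeriv A B) z := by
  obtain ⟨A, B, hAB, hf⟩ := exists_rayleighOp_iterate_csinc l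
  set c : ℂ := (-1) ^ l
  have hc : c ^ 2 = 1 := by rw [← pow_mul, mul_comm, pow_mul]; simp
  have hmul : ∀ z ≠ 0, z * sphBessel l z = sinCosInvPoly (c • A) (c • B) z := by
    intro z hz
    rw [sinCosInvPoly_smul, sphBessel_eq_neg_pow_mul_rayleighOp_iterate, neg_pow, hf z hz, inv_pow]
    field_simp
    ring
  refine ⟨c • A, c • B, ?_, fun z hz => ⟨hmul z hz, ?_⟩⟩
  · simp only [eval_smul, smul_eq_mul, mul_pow, hc]
    linear_combination hAB
  have hev : (fun w => w * sphBessel l w) =ᶠ[nhds z] sinCosInvPoly (c • A) (c • B) :=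
    Filter.eventually_of_mem (isOpen_ne.mem_nhds hz) hmul
  have hj : DifferentiableAt ℂ (sphBessel l) z := by
    refine ((differentiableAt_inv hz).fun_mul
      (hasDerivAt_sinCosInvPoly (c • A) (c • B) hz).differentiableAt).congr_of_eventuallyEq ?_
    filter_upwards [isOpen_ne.mem_nhds hz] with w hw
    rw [← hmul w hw, inv_mul_cancel_left₀ hw]
  have hprod := (hasDerivAt_id z).mul hj.hasDerivAt
  simp only [id, one_mul] at hprod
  exact hprod.unique ((hasDerivAt_sinCosInvPoly _ _ hz).congr_of_eventuallyEq hev)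

theorem exists_norm_sinCosInvPoly_ofReal_le (A B : ℂ[X]) {ε : ℝ} (hε : 0 < ε) :
    ∃ C, ∀ x : ℝ, ε ≤ |x| → ‖sinCosInvPoly A B x‖ ≤ C := by
  obtain ⟨CA, hCA⟩ := (isCompact_closedBall (0 : ℂ) ε⁻¹).exists_bound_of_continuousOn
    (f := fun w => A.eval w) A.continuous.continuousOn
  obtain ⟨CB, hCB⟩ := (isCompact_closedBall (0 : ℂ) ε⁻¹).exists_bound_of_continuousOn
    (f := fun w => B.eval w) B.continuous.continuousOn
  refine ⟨CA + CB, fun x hx => ?_⟩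
  have hmem : (x : ℂ)⁻¹ ∈ Metric.closedBall 0 ε⁻¹ := by
    rw [mem_closedBall_zero_iff, norm_inv, Complex.norm_real, Real.norm_eq_abs]
    exact inv_anti₀ hε hx
  have hsin : ‖Complex.sin x‖ ≤ 1 := by
    rw [← Complex.ofReal_sin, Complex.norm_real, Real.norm_eq_abs]
    exact Real.abs_sin_le_one x
  have hcos : ‖Complex.cos x‖ ≤ 1 := by
    rw [← Complex.ofReal_cos, Complex.norm_real, Real.norm_eq_abs]
    exact Real.abs_cos_le_one x
  calc ‖sinCosInvPoly A B x‖
      ≤ ‖A.eval (x : ℂ)⁻¹‖ * ‖Complex.sin x‖ + ‖B.eval (x : ℂ)⁻¹‖ * ‖Complex.cos x‖ := by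
        rw [sinCosInvPoly, ← norm_mul, ← norm_mul]
        exact norm_add_le _ _
    _ ≤ CA * 1 + CB * 1 := by
        gcongr
        exacts [(norm_nonneg _).trans (hCA _ hmem), hCA _ hmem,
          (norm_nonneg _).trans (hCB _ hmem), hCB _ hmem]
    _ = CA + CB := by ring

theorem mul_sub_mul_eq_zero_of_sin_cos {a b a' b' z : ℂ}
    (h : a * Complex.sin z + b * Complex.cos z = 0)
    (h' : a' * Complex.sin z + b' * Complex.cos z = 0) : a * b' - b * a' = 0 := by
  linear_combination (Complex.sin z * b' - Complex.cos z * a') * h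
    + (Complex.cos z * a - Complex.sin z * b) * h' - (a * b' - b * a') * Complex.sin_sq_add_cos_sq z

theorem interior_setOf_sinCosInvPoly_ofReal_eq_zero {A B : ℂ[X]}
    (hAB : A.eval 0 ^ 2 + B.eval 0 ^ 2 ≠ 0) :
    interior {x : ℝ | x ≠ 0 ∧ sinCosInvPoly A B x = 0} = ∅ := by
  set U := interior {x : ℝ | x ≠ 0 ∧ sinCosInvPoly A B x = 0}
  set D := A * cosCoeffDeriv A B - B * sinCoeffDeriv A B
  by_contra hU
  obtain ⟨x₀, hx₀⟩ := Set.nonempty_iff_ne_empty.2 hU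
  have hroot : ∀ x ∈ U, D.IsRoot (x : ℂ)⁻¹ := by
    intro x hx
    obtain ⟨hx0, hWx⟩ := interior_subset hx
    have hW' : sinCosInvPoly (sinCoeffDeriv A B) (cosCoeffDeriv A B) x = 0 := by
      have hloc : (fun t : ℝ => sinCosInvPoly A B t) =ᶠ[nhds x] fun _ => 0 :=
        Filter.eventually_of_mem (isOpen_interior.mem_nhds hx) fun t ht => (interior_subset ht).2
      exact ((hasDerivAt_sinCosInvPoly A B (Complex.ofReal_ne_zero.2 hx0)).comp_ofReal).unique
        ((hasDerivAt_const x 0).congr_of_eventuallyEq hloc)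
    simp only [IsRoot, D, eval_sub, eval_mul]
    exact mul_sub_mul_eq_zero_of_sin_cos hWx hW'
  have hinf : {w : ℂ | D.IsRoot w}.Infinite := by
    refine ((infinite_of_mem_nhds x₀ (isOpen_interior.mem_nhds hx₀)).image
      (f := fun x : ℝ => (x : ℂ)⁻¹) ?_).mono ?_
    · exact fun x _ y _ hxy => Complex.ofReal_injective (inv_injective hxy)
    · rintro _ ⟨x, hx, rfl⟩
      exact hroot x hx
  apply hAB
  simpa [D, sq] using congrArg (eval 0) (D.eq_zero_of_infinite_isRoot hinf)

theorem interior_setOf_sphBessel_add_mul_deriv_eq_zero (l : ℕ) {R : ℝ} (hR : R ≠ 0) :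
    interior {k : ℝ | k ≠ 0 ∧
      sphBessel l (k * R) + (R : ℂ) * k * deriv (sphBessel l) (k * R) = 0} = ∅ := by
  obtain ⟨A, B, hAB, hW⟩ := exists_sinCosInvPoly_sphBessel l
  have hset : {k : ℝ | k ≠ 0 ∧
      sphBessel l (k * R) + (R : ℂ) * k * deriv (sphBessel l) (k * R) = 0} =
      Homeomorph.mulRight₀ R hR ⁻¹'
        {x : ℝ | x ≠ 0 ∧ sinCosInvPoly (sinCoeffDeriv A B) (cosCoeffDeriv A B) x = 0} := by
    ext k
    simp only [mem_ofPred_eq, mem_preimage, Homeomorph.coe_mulRight₀, ne_eq, mul_eq_zero, hR,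
      or_false]
    refine and_congr_right fun hk => ?_
    rw [← (hW _ (by exact_mod_cast mul_ne_zero hk hR)).2]
    push_cast
    ring_nf
  rw [hset, ← Homeomorph.preimage_interior,
    interior_setOf_sinCosInvPoly_ofReal_eq_zero (by simp [hAB, add_comm]), preimage_empty]

theorem exists_norm_le_of_sphBessel_initial {R r₀ : ℝ} (hR : 0 < R) (hRr₀ : R < r₀)
    {n : ℝ → ℝ} (hn : ContDiffOn ℝ 1 n (Icc R r₀)) (hnpos : ∀ r ∈ Icc R r₀, 0 < n r)
    (hnR : n R = 1) (l : ℕ) :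
    ∃ M, ∀ k : ℝ, 1 ≤ |k| → ∀ u : ℝ → ℂ, ContDiffOn ℝ 2 u (Icc R r₀) →
      (∀ r ∈ Ioo R r₀, deriv (deriv u) r
        + ((k : ℂ) ^ 2 * (n r : ℂ) - ((l * (l + 1) : ℕ) : ℂ) / (r : ℂ) ^ 2) * u r = 0) →
      u R = (R : ℂ) * sphBessel l (k * R) →
      derivWithin u (Icc R r₀) R =
        sphBessel l (k * R) + (R : ℂ) * k * deriv (sphBessel l) (k * R) →
      ‖u r₀‖ ≤ M := by
  obtain ⟨A, B, -, hW⟩ := exists_sinCosInvPoly_sphBessel l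
  obtain ⟨C₀, hC₀⟩ := exists_norm_sinCosInvPoly_ofReal_le A B hR
  obtain ⟨C₁, hC₁⟩ := exists_norm_sinCosInvPoly_ofReal_le (sinCoeffDeriv A B) (cosCoeffDeriv A B) hR
  obtain ⟨C, hC, hE⟩ := exists_norm_sq_le_radial_energy (F := ℂ) hR hRr₀ hn hnpos
    ((l * (l + 1) : ℕ) : ℝ)
  refine ⟨√(C * (C₁ ^ 2 + C₀ ^ 2)), fun k hk u hu hode hu₀ hu₁ => ?_⟩
  have hx : R ≤ |k * R| := by rw [abs_mul, abs_of_pos hR]; nlinarith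
  have hk0 : k ≠ 0 := by rintro rfl; norm_num at hk
  obtain ⟨hW₀, hW₁⟩ := hW (k * R) (mul_ne_zero (Complex.ofReal_ne_zero.2 hk0)
    (Complex.ofReal_ne_zero.2 hR.ne'))
  have hv : ‖derivWithin u (Icc R r₀) R‖ ≤ C₁ := by
    have := hC₁ _ hx
    push_cast at this
    rwa [← hW₁, show (k : ℂ) * R * deriv (sphBessel l) (k * R) = R * k * deriv (sphBessel l) (k * R)
      by ring, ← hu₁] at this
  have huR : k ^ 2 * n R * ‖u R‖ ^ 2 ≤ C₀ ^ 2 := by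
    have := hC₀ _ hx
    push_cast at this
    rw [← hW₀, show (k : ℂ) * R * sphBessel l (k * R) = k * u R by rw [hu₀]; ring, norm_mul,
      Complex.norm_real, Real.norm_eq_abs] at this
    rw [hnR, mul_one, ← sq_abs k, ← mul_pow]
    exact pow_le_pow_left₀ (by positivity) this 2
  refine abs_norm (u r₀) ▸ Real.abs_le_sqrt ((hE k hk u hu fun r hr => ?_).trans (by gcongr))
  have := hode r hr
  rw [Complex.real_smul]
  push_cast at this ⊢
  linear_combination this

theorem extended_solution_bounded_on_real_axis_general
    (R R₀ : ℝ) (hR : 0 < R) (hRR₀ : R < R₀)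
    (n : ℝ → ℝ) (hn : ContDiffOn ℝ 2 n (Set.Ici 0))
    (hnpos : ∀ r ∈ Set.Ici (0:ℝ), 0 < n r)
    (hnin : ∀ r ∈ Set.Icc (0:ℝ) R, n r = 1)
    (l : ℕ)
    (y : ℂ → ℝ → ℂ)
    (hy : ∀ k : ℂ, ContDiffOn ℝ 2 (y k) (Set.Ici R))
    (hode : ∀ k : ℂ, ∀ r ∈ Set.Ici R,
      deriv (deriv (y k)) r
        + (k ^ 2 * (n r : ℂ) - ((l * (l + 1) : ℕ) : ℂ) / (r : ℂ) ^ 2) * y k r = 0)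
    (hinit : ∀ k : ℂ, y k R = (R : ℂ) * sphBessel l (k * R))
    (hinit' : ∀ k : ℂ, deriv (y k) R =
      sphBessel l (k * R) + (R : ℂ) * k * deriv (sphBessel l) (k * R))
    (hcont : ∀ r ∈ Set.Ici R, Continuous fun k : ℂ => y k r) :
    ∀ r : ℝ, R₀ ≤ r → ∃ M : ℝ, 0 < M ∧ ∀ k : ℝ, ‖y (k : ℂ) r‖ ≤ M := by
  intro r₀ hr₀
  have hRr₀ : R < r₀ := hRR₀.trans_le hr₀
  have hIcc : Icc R r₀ ⊆ Ici 0 := fun r hr => hR.le.trans hr.1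
  have hyr₀ : Continuous fun k : ℝ => ‖y k r₀‖ :=
    ((hcont r₀ hRr₀.le).comp Complex.continuous_ofReal).norm
  obtain ⟨M₀, hM₀⟩ := (isCompact_Icc (a := -1) (b := 1)).exists_bound_of_continuousOn
    hyr₀.continuousOn
  obtain ⟨M₁, hM₁⟩ := exists_norm_le_of_sphBessel_initial hR hRr₀ ((hn.of_le one_le_two).mono hIcc)
    (fun r hr => hnpos r (hIcc hr)) (hnin R ⟨hR.le, le_rfl⟩) l
  refine ⟨|M₀| + |M₁| + 1, by positivity, fun k => ?_⟩
  refine (interior_eq_empty_iff_dense_compl.1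
    (interior_setOf_sphBessel_add_mul_deriv_eq_zero l hR.ne')).induction
    (P := fun k : ℝ => ‖y k r₀‖ ≤ |M₀| + |M₁| + 1) (fun k hk => ?_)
    (isClosed_le hyr₀ continuous_const) k
  rcases le_or_gt |k| 1 with hk1 | hk1
  · have := hM₀ k (abs_le.1 hk1)
    rw [norm_norm] at this
    linarith [le_abs_self M₀, abs_nonneg M₁]
  · have hdiff : DifferentiableAt ℝ (y k) R := by
      by_contra hnd
      refine hk ⟨by rintro rfl; norm_num at hk1, ?_⟩
      rw [← hinit', deriv_zero_of_not_differentiableAt hnd]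
    have := hM₁ k hk1.le (y k) ((hy k).mono Icc_subset_Ici_self)
      (fun r hr => hode k r hr.1.le) (hinit k)
      (by rw [hdiff.derivWithin (uniqueDiffOn_Icc hRr₀ R (left_mem_Icc.2 hRr₀.le)), hinit'])
    linarith [le_abs_self M₁, abs_nonneg M₀]

/-- Boundedness on the real axis (second assertion of Lemma 2.1): for each fixed `r ≥ R₀`
there is `M > 0` with `|y(r;k)| ≤ M` for all real `k`. -/
theorem extended_solution_bounded_on_real_axis
    (R R₀ : ℝ) (hR : 0 < R) (hRR₀ : R < R₀)
    (n : ℝ → ℝ) (hn : ContDiffOn ℝ 2 n (Set.Ici 0))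
    (hnpos : ∀ r ∈ Set.Ici (0:ℝ), 0 < n r)
    (hnin : ∀ r ∈ Set.Icc (0:ℝ) R, n r = 1) (hnout : ∀ r ∈ Set.Ici R₀, n r = 1)
    (l : ℕ)
    (y : ℂ → ℝ → ℂ)
    (hy : ∀ k : ℂ, ContDiffOn ℝ 2 (y k) (Set.Ici R))
    (hode : ∀ k : ℂ, ∀ r ∈ Set.Ici R,
      deriv (deriv (y k)) r
        + (k ^ 2 * (n r : ℂ) - ((l * (l + 1) : ℕ) : ℂ) / (r : ℂ) ^ 2) * y k r = 0)
    (hinit : ∀ k : ℂ, y k R = (R : ℂ) * sphBessel l (k * R))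
    (hinit' : ∀ k : ℂ, deriv (y k) R =
      sphBessel l (k * R) + (R : ℂ) * k * deriv (sphBessel l) (k * R))
    (hcont : ∀ r ∈ Set.Ici R, Continuous fun k : ℂ => y k r) :
    ∀ r : ℝ, R₀ ≤ r → ∃ M : ℝ, 0 < M ∧ ∀ k : ℝ, ‖y (k : ℂ) r‖ ≤ M :=
  extended_solution_bounded_on_real_axis_general R R₀ hR hRR₀ n hn hnpos hnin l y hy hode hinit
    hinit' hcont
end

section
/- Indicator of the spherical Bessel function (Lemma 3.7, first part): for every R₀ > 0, every l ∈ ℕ and every θ ∈ [0, 2π], the indicator function of the entire function k ↦ j_l(k·R₀) equals R₀·|sin θ|, i.e. limsup_{r→∞} log|j_l(R₀·r·e^{iθ})| / r = R₀·|sin θ|. -/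
open scoped Real

/-- The (Lindelöf) indicator function of order 1 of `f : ℂ → ℂ`, valued in `[−∞,+∞]`. -/
noncomputable def indic (f : ℂ → ℂ) (θ : ℝ) : EReal :=
  Filter.limsup
    (fun r : ℝ => ((Real.log ‖f (r * Complex.exp (θ * Complex.I))‖ / r : ℝ) : EReal))
    Filter.atTop

/-!
Unfolding Rayleigh's formula, `z j_l(z) = (-1)^l (P(z) e^{iz} + Q(z) e^{-iz}) / z^l` for `z ≠ 0`,
with polynomials `P`, `Q` of degree `≤ l` whose top coefficients recombine into `sin (z - lπ/2)`.
Hence `z j_l(z) = sin (z - lπ/2) + o(e^{|Im z|})` as `|z| → ∞`. On the ray,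
`|Im z| = R₀ r |sin θ|`, and `|sin w| ≤ e^{|Im w|}` bounds `|j_l|` by `2 e^{R₀ r |sin θ|}`.
Conversely `|sin w| ≥ |sinh (Im w)| ≥ e^{|Im w|} / 4` once `|Im w| ≥ 1`, which settles
`sin θ ≠ 0`; on the real axis one uses the points where `|sin| = 1`. In both cases
`|j_l| ≥ e^{R₀ r |sin θ|} / (8 R₀ r)` for arbitrarily large `r`, and such polynomial factors are
invisible in `log |j_l| / r`.
-/

open Polynomial Filter Topology Bornology Asymptotics Complex

theorem Polynomial.tendsto_eval_div_pow_cobounded {R : Type*} [NormedField R] (p : R[X]) {n : ℕ}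
    (hp : p.natDegree ≤ n) :
    Tendsto (fun z => p.eval z / z ^ n) (cobounded R) (𝓝 (p.coeff n)) := by
  set q := p - C (p.coeff n) * X ^ n
  have hq : q.degree < (X ^ n : R[X]).degree := by
    rw [degree_X_pow, degree_lt_iff_coeff_zero]
    intro m hm
    rcases eq_or_lt_of_le hm with rfl | hlt
    · simp [q]
    · simp [q, coeff_X_pow, hlt.ne', coeff_eq_zero_of_natDegree_lt (hp.trans_lt hlt)]
  have hsmall := (isLittleO_cobounded_of_degree_lt hq).tendsto_div_nhds_zero
  simpa using (hsmall.add_const (p.coeff n)).congr' <|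
    (eventually_ne_cobounded 0).mono fun z hz => by simp [q, sub_div, pow_ne_zero n hz]

theorem Complex.sin_eq_exp_I_mul (z : ℂ) :
    sin z = -I / 2 * exp (I * z) + I / 2 * exp (-I * z) := by
  rw [Complex.sin, mul_comm z, neg_mul, ← mul_neg, mul_comm z]
  ring

theorem Complex.exp_I_mul_nat_mul_pi_div_two (l : ℕ) : exp (I * (l * π / 2)) = I ^ l := by
  rw [show I * (l * π / 2) = l * (π / 2 * I) by ring, exp_nat_mul, exp_mul_I]
  simp [← ofReal_ofNat, ← ofReal_div, ← ofReal_cos, ← ofReal_sin]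

theorem Complex.sin_sub_nat_mul_pi_div_two (l : ℕ) (z : ℂ) :
    sin (z - l * π / 2) =
      (-1) ^ l * (-I / 2 * I ^ l * exp (I * z) + -(-I) / 2 * (-I) ^ l * exp (-I * z)) := by
  have hsq : ((-1 : ℂ) ^ l) ^ 2 = 1 := by rw [← pow_mul, mul_comm, pow_mul]; simp
  have hIl : I ^ l ≠ 0 := pow_ne_zero l I_ne_zero
  have hI2 : (I ^ l) ^ 2 = (-1) ^ l := by rw [← pow_mul, mul_comm, pow_mul, I_sq]
  rw [sin_eq_exp_I_mul, show I * (z - l * π / 2) = I * z - I * (l * π / 2) by ring,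
    show -I * (z - l * π / 2) = -I * z + I * (l * π / 2) by ring, exp_sub, exp_add,
    exp_I_mul_nat_mul_pi_div_two, neg_pow I]
  field_simp
  rw [hI2]
  linear_combination (exp (I * z) - (-1) ^ l * exp (-(I * z))) * hsq

theorem Complex.norm_exp_I_mul (z : ℂ) : ‖exp (I * z)‖ = Real.exp (-z.im) := by
  simp [norm_exp]

theorem Complex.norm_exp_neg_I_mul (z : ℂ) : ‖exp (-I * z)‖ = Real.exp z.im := by
  simp [norm_exp]

theorem Complex.norm_sin_le_exp_abs_im (z : ℂ) : ‖sin z‖ ≤ Real.exp |z.im| := by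
  have hexp : Real.exp (-z.im) ≤ Real.exp |z.im| ∧ Real.exp z.im ≤ Real.exp |z.im| :=
    ⟨Real.exp_le_exp.mpr (neg_le_abs _), Real.exp_le_exp.mpr (le_abs_self _)⟩
  calc ‖sin z‖ ≤ ‖-I / 2 * exp (I * z)‖ + ‖I / 2 * exp (-I * z)‖ := by
        rw [sin_eq_exp_I_mul]; exact norm_add_le _ _
    _ = (Real.exp (-z.im) + Real.exp z.im) / 2 := by
        simp only [norm_mul, norm_exp_I_mul, norm_exp_neg_I_mul, Complex.norm_div, norm_neg, norm_I,
          norm_ofNat]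
        ring
    _ ≤ Real.exp |z.im| := by linarith

theorem Complex.abs_sinh_im_le_norm_sin (z : ℂ) : |Real.sinh z.im| ≤ ‖sin z‖ := by
  calc |Real.sinh z.im| = |‖I / 2 * exp (-I * z)‖ - ‖I / 2 * exp (I * z)‖| := by
        simp only [norm_mul, norm_exp_I_mul, norm_exp_neg_I_mul, Real.sinh_eq, Complex.norm_div,
          norm_I, norm_ofNat]
        ring_nf
    _ ≤ ‖I / 2 * exp (-I * z) - I / 2 * exp (I * z)‖ := abs_norm_sub_norm_le _ _
    _ = ‖sin z‖ := by rw [sin_eq_exp_I_mul]; ring_nf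

theorem Real.exp_le_four_mul_sinh {t : ℝ} (ht : 1 ≤ t) : Real.exp t ≤ 4 * Real.sinh t := by
  have h1 := Real.add_one_le_exp t
  have h2 : Real.exp t * Real.exp (-t) = 1 := by rw [← Real.exp_add]; simp
  have h3 := Real.exp_pos (-t)
  rw [Real.sinh_eq]
  nlinarith

theorem Real.frequently_abs_sin_mul_sub_eq_one (R c : ℝ) (hR : 0 < R) :
    ∃ᶠ t : ℝ in atTop, |Real.sin (R * t - c)| = 1 := by
  have hseq : Tendsto (fun m : ℕ => (π / 2 + m * (2 * π) + c) / R) atTop atTop :=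
    (tendsto_atTop_add_const_right _ _ <| tendsto_atTop_add_const_left _ _ <|
      tendsto_natCast_atTop_atTop.atTop_mul_const (by positivity)).atTop_div_const hR
  refine hseq.frequently (.of_forall fun m => ?_)
  rw [mul_div_cancel₀ _ hR.ne', add_sub_cancel_right, Real.sin_add_nat_mul_two_pi,
    Real.sin_pi_div_two, abs_one]

theorem Complex.im_ofReal_mul_exp_mul_ofReal (r θ R : ℝ) :
    (r * exp (θ * I) * R : ℂ).im = r * Real.sin θ * R := by
  simp [exp_ofReal_mul_I_im]

theorem Complex.abs_im_ofReal_mul_exp_mul_ofReal {r R : ℝ} (hr : 0 ≤ r) (hR : 0 < R) (θ : ℝ) :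
    |(r * exp (θ * I) * R : ℂ).im| = R * |Real.sin θ| * r := by
  rw [im_ofReal_mul_exp_mul_ofReal, abs_mul, abs_mul, abs_of_nonneg hr, abs_of_pos hR]
  ring

theorem Complex.norm_ofReal_mul_exp_mul_ofReal {r R : ℝ} (hr : 0 ≤ r) (hR : 0 < R) (θ : ℝ) :
    ‖(r * exp (θ * I) * R : ℂ)‖ = R * r := by
  simp [abs_of_nonneg hr, abs_of_pos hR, mul_comm]

theorem Complex.tendsto_ofReal_mul_exp_mul_ofReal_cobounded {R : ℝ} (hR : 0 < R) (θ : ℝ) :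
    Tendsto (fun r : ℝ => (r * exp (θ * I) * R : ℂ)) atTop (cobounded ℂ) := by
  rw [← tendsto_norm_atTop_iff_cobounded]
  exact (tendsto_id.const_mul_atTop hR).congr' <| (eventually_ge_atTop 0).mono fun r hr =>
    (norm_ofReal_mul_exp_mul_ofReal hr hR θ).symm

theorem Complex.frequently_exp_abs_im_le_four_mul_norm_sin (R θ c : ℝ) (hR : 0 < R) :
    ∃ᶠ r : ℝ in atTop, Real.exp |(r * exp (θ * I) * R : ℂ).im|
      ≤ 4 * ‖sin (r * exp (θ * I) * R - c)‖ := by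
  rcases eq_or_ne (Real.sin θ) 0 with hsin | hsin
  · have hcos : Real.cos θ = 1 ∨ Real.cos θ = -1 := by
      have := Real.sin_sq_add_cos_sq θ
      rw [hsin] at this
      exact sq_eq_one_iff.mp (by linarith)
    have hfreq : ∃ᶠ r : ℝ in atTop, |Real.sin (R * Real.cos θ * r - c)| = 1 := by
      rcases hcos with hcos | hcos
      · simpa [hcos] using Real.frequently_abs_sin_mul_sub_eq_one R c hR
      · refine (Real.frequently_abs_sin_mul_sub_eq_one R (-c) hR).mono fun r hr => ?_
        rwa [hcos, show R * -1 * r - c = -(R * r - -c) by ring, Real.sin_neg, abs_neg]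
    refine hfreq.mono fun r hr => ?_
    have hreal : r * exp (θ * I) * R - c = ((R * Real.cos θ * r - c : ℝ) : ℂ) := by
      rw [exp_mul_I, ← ofReal_cos, ← ofReal_sin, hsin]; push_cast; ring
    rw [im_ofReal_mul_exp_mul_ofReal, hsin, mul_zero, zero_mul, abs_zero, Real.exp_zero, hreal,
      ← ofReal_sin, norm_real, Real.norm_eq_abs, hr]
    norm_num
  · refine Eventually.frequently ?_
    have hgrow : Tendsto (fun r => R * |Real.sin θ| * r) atTop atTop :=
      tendsto_id.const_mul_atTop (by positivity)
    filter_upwards [hgrow.eventually_ge_atTop 1, eventually_ge_atTop 0] with r hr hr0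
    rw [← abs_im_ofReal_mul_exp_mul_ofReal hr0 hR] at hr
    calc Real.exp |(r * exp (θ * I) * R : ℂ).im|
        ≤ 4 * Real.sinh |(r * exp (θ * I) * R : ℂ).im| := Real.exp_le_four_mul_sinh hr
      _ ≤ 4 * ‖sin (r * exp (θ * I) * R - c)‖ := by
          rw [← Real.abs_sinh]
          gcongr
          simpa using abs_sinh_im_le_norm_sin (r * exp (θ * I) * R - c)

-- `f ↦ f' / w` maps `p(w) e^{cw} / w^(2l+1)` to `q(w) e^{cw} / w^(2l+3)`, `q` being the next term.
noncomputable def rayleighPoly (c : ℂ) : ℕ → ℂ[X]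
  | 0 => C (-c / 2)
  | l + 1 => (derivative (rayleighPoly c l) + C c * rayleighPoly c l) * X
      - C ((2 * l + 1 : ℕ) : ℂ) * rayleighPoly c l

theorem natDegree_rayleighPoly_le (c : ℂ) (l : ℕ) : (rayleighPoly c l).natDegree ≤ l := by
  induction l with
  | zero => simp [rayleighPoly]
  | succ l ih =>
    rw [rayleighPoly]
    have hfactor : (derivative (rayleighPoly c l) + C c * rayleighPoly c l).natDegree ≤ l :=
      natDegree_add_le_of_degree_le ((natDegree_derivative_le _).trans (by omega))
        ((natDegree_C_mul_le _ _).trans ih)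
    exact (natDegree_sub_le _ _).trans <| max_le (natDegree_mul_le_of_le hfactor natDegree_X_le)
      ((natDegree_C_mul_le _ _).trans ih |>.trans l.le_succ)

theorem coeff_rayleighPoly (c : ℂ) (l : ℕ) : (rayleighPoly c l).coeff l = -c / 2 * c ^ l := by
  induction l with
  | zero => simp [rayleighPoly]
  | succ l ih =>
    have hvanish : (rayleighPoly c l).coeff (l + 1) = 0 :=
      coeff_eq_zero_of_natDegree_lt (natDegree_rayleighPoly_le c l |>.trans_lt l.lt_succ_self)
    rw [rayleighPoly, coeff_sub, coeff_mul_X, coeff_add, coeff_derivative, coeff_C_mul,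
      coeff_C_mul, hvanish, ih]
    ring

theorem hasDerivAt_eval_mul_exp_div_pow (p : ℂ[X]) (c : ℂ) (n : ℕ) {z : ℂ} (hz : z ≠ 0) :
    HasDerivAt (fun w => p.eval w * exp (c * w) / w ^ n)
      (((derivative p + C c * p) * X - C (n : ℂ) * p).eval z * exp (c * z) / z ^ (n + 1)) z := by
  have hexp : HasDerivAt (fun w => exp (c * w)) (exp (c * z) * c) z := by
    simpa using ((hasDerivAt_id z).const_mul c).cexp
  refine ((p.hasDerivAt z).mul hexp).div (hasDerivAt_pow n z) (pow_ne_zero n hz)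
    |>.congr_deriv ?_
  rcases n with _ | n
  · simp [field]
  · simp only [Pi.mul_apply, eval_sub, eval_mul, eval_add, eval_C, eval_X, Nat.add_sub_cancel]
    field_simp
    ring

noncomputable def invMulDeriv (f : ℂ → ℂ) (w : ℂ) : ℂ := 1 / w * deriv f w

theorem iterate_invMulDeriv_csinc (l : ℕ) {z : ℂ} (hz : z ≠ 0) :
    (invMulDeriv^[l] csinc) z =
      (rayleighPoly I l).eval z * exp (I * z) / z ^ (2 * l + 1)
        + (rayleighPoly (-I) l).eval z * exp (-I * z) / z ^ (2 * l + 1) := by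
  induction l generalizing z with
  | zero =>
    simp only [Function.iterate_zero, id_eq, csinc, if_neg hz, rayleighPoly, eval_C]
    rw [sin_eq_exp_I_mul]
    ring
  | succ l ih =>
    have hnear : invMulDeriv^[l] csinc =ᶠ[𝓝 z] fun w =>
        (rayleighPoly I l).eval w * exp (I * w) / w ^ (2 * l + 1)
          + (rayleighPoly (-I) l).eval w * exp (-I * w) / w ^ (2 * l + 1) := by
      filter_upwards [isOpen_ne.mem_nhds hz] with w hw using ih hw
    rw [Function.iterate_succ_apply', invMulDeriv, hnear.deriv_eq,
      ((hasDerivAt_eval_mul_exp_div_pow _ I _ hz).fun_add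
        (hasDerivAt_eval_mul_exp_div_pow _ (-I) _ hz)).deriv]
    simp only [rayleighPoly]
    field_simp
    ring

theorem mul_sphBessel_eq_rayleighPoly (l : ℕ) {z : ℂ} (hz : z ≠ 0) :
    z * sphBessel l z = (-1) ^ l * ((rayleighPoly I l).eval z / z ^ l * exp (I * z)
      + (rayleighPoly (-I) l).eval z / z ^ l * exp (-I * z)) := by
  change z * ((-z) ^ l * (invMulDeriv^[l] csinc) z) = _
  rw [iterate_invMulDeriv_csinc l hz, neg_pow]
  field_simp
  ring

theorem mul_sphBessel_sub_sin_isLittleO (l : ℕ) :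
    (fun z => z * sphBessel l z - sin (z - l * π / 2)) =o[cobounded ℂ]
      fun z => Real.exp |z.im| := by
  have hcoeff (c : ℂ) : (fun z => (rayleighPoly c l).eval z / z ^ l - -c / 2 * c ^ l)
      =o[cobounded ℂ] fun _ => (1 : ℝ) := by
    rw [isLittleO_one_iff, tendsto_sub_nhds_zero_iff, ← coeff_rayleighPoly]
    exact (rayleighPoly c l).tendsto_eval_div_pow_cobounded (natDegree_rayleighPoly_le c l)
  have hexpI : (fun z => exp (I * z)) =O[cobounded ℂ] fun z => Real.exp |z.im| :=
    .of_bound' <| .of_forall fun z => by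
      rw [norm_exp_I_mul, Real.norm_of_nonneg (Real.exp_nonneg _)]
      exact Real.exp_le_exp.mpr (neg_le_abs z.im)
  have hexpNegI : (fun z => exp (-I * z)) =O[cobounded ℂ] fun z => Real.exp |z.im| :=
    .of_bound' <| .of_forall fun z => by
      rw [norm_exp_neg_I_mul, Real.norm_of_nonneg (Real.exp_nonneg _)]
      exact Real.exp_le_exp.mpr (le_abs_self z.im)
  refine (((hcoeff I).mul_isBigO hexpI).add ((hcoeff (-I)).mul_isBigO hexpNegI)
    |>.const_mul_left ((-1) ^ l)).congr' ?_ (.of_forall fun z => one_mul _)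
  filter_upwards [eventually_ne_cobounded 0] with z hz
  rw [mul_sphBessel_eq_rayleighPoly l hz, sin_sub_nat_mul_pi_div_two]
  ring

theorem eventually_norm_mul_sphBessel_le (l : ℕ) :
    ∀ᶠ z in cobounded ℂ, ‖z * sphBessel l z‖ ≤ 2 * Real.exp |z.im| := by
  filter_upwards [(mul_sphBessel_sub_sin_isLittleO l).bound one_pos] with z hz
  rw [one_mul, Real.norm_of_nonneg (Real.exp_nonneg _)] at hz
  calc ‖z * sphBessel l z‖
      ≤ ‖sin (z - l * π / 2)‖ + ‖z * sphBessel l z - sin (z - l * π / 2)‖ :=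
        norm_le_norm_add_norm_sub' _ _
    _ ≤ Real.exp |z.im| + Real.exp |z.im| := by
        gcongr
        simpa using norm_sin_le_exp_abs_im (z - l * π / 2)
    _ = 2 * Real.exp |z.im| := by ring

theorem eventually_exp_abs_im_le_norm_mul_sphBessel (l : ℕ) :
    ∀ᶠ z in cobounded ℂ, Real.exp |z.im| ≤ 4 * ‖sin (z - l * π / 2)‖ →
      Real.exp |z.im| ≤ 8 * ‖z * sphBessel l z‖ := by
  filter_upwards [(mul_sphBessel_sub_sin_isLittleO l).bound (by norm_num : (0 : ℝ) < 1 / 8)]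
    with z hz hsin
  rw [Real.norm_of_nonneg (Real.exp_nonneg _)] at hz
  have := norm_sub_norm_le (sin (z - l * π / 2)) (z * sphBessel l z)
  rw [norm_sub_rev] at this
  linarith

theorem limsup_coe_eq_of_eventually_le_of_frequently_le {α : Type*} {l : Filter α} [l.NeBot]
    {u a b : α → ℝ} {s : ℝ} (ha : Tendsto a l (𝓝 s)) (hb : Tendsto b l (𝓝 s))
    (hua : ∀ᶠ x in l, u x ≤ a x) (hbu : ∃ᶠ x in l, b x ≤ u x) :
    limsup (fun x => (u x : EReal)) l = s := by
  refine le_antisymm ?_ ?_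
  · calc limsup (fun x => (u x : EReal)) l ≤ limsup (fun x => (a x : EReal)) l :=
          limsup_le_limsup (hua.mono fun x h => EReal.coe_le_coe_iff.mpr h)
      _ = s := (EReal.tendsto_coe.mpr ha).limsup_eq
  · calc (s : EReal) = liminf (fun x => (b x : EReal)) l :=
          (EReal.tendsto_coe.mpr hb).liminf_eq.symm
      _ ≤ limsup (fun x => (u x : EReal)) l :=
          liminf_le_limsup_of_frequently_le (hbu.mono fun x h => EReal.coe_le_coe_iff.mpr h)

theorem Real.tendsto_log_mul_div_atTop_nhds_zero {K : ℝ} (hK : 0 < K) :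
    Tendsto (fun r => Real.log (K * r) / r) atTop (𝓝 0) := by
  have hsum := (tendsto_const_nhds (x := Real.log K)).div_atTop tendsto_id |>.add
    Real.isLittleO_log_id_atTop.tendsto_div_nhds_zero
  rw [add_zero] at hsum
  refine hsum.congr' ?_
  filter_upwards [eventually_gt_atTop 0] with r hr
  rw [Real.log_mul hK.ne' hr.ne', add_div, id]

-- `Real.log 0 = 0`: a zero of `f` on the ray contributes `0`, not `-∞`, to the limsup.
theorem indic_eq_of_bounds {f : ℂ → ℂ} {θ s C K : ℝ} (hs : 0 ≤ s) (hC : 1 ≤ C) (hK : 0 < K)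
    (hup : ∀ᶠ r : ℝ in atTop, ‖f (r * exp (θ * I))‖ ≤ C * Real.exp (s * r))
    (hlow : ∃ᶠ r : ℝ in atTop, Real.exp (s * r) ≤ K * r * ‖f (r * exp (θ * I))‖) :
    indic f θ = s := by
  refine limsup_coe_eq_of_eventually_le_of_frequently_le (a := fun r => s + Real.log C / r)
    (b := fun r => s - Real.log (K * r) / r) ?_ ?_ ?_ ?_
  · simpa using (tendsto_const_nhds (x := Real.log C)).div_atTop tendsto_id |>.const_add s
  · simpa using (Real.tendsto_log_mul_div_atTop_nhds_zero hK).const_sub s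
  · filter_upwards [hup, eventually_gt_atTop 0] with r hr hr0
    rw [add_div' _ _ _ hr0.ne', div_le_div_iff_of_pos_right hr0]
    rcases (norm_nonneg (f (r * exp (θ * I)))).eq_or_lt with h0 | hpos
    · rw [← h0, Real.log_zero]
      have := Real.log_nonneg hC
      positivity
    · calc Real.log ‖f (r * exp (θ * I))‖ ≤ Real.log (C * Real.exp (s * r)) :=
            Real.log_le_log hpos hr
        _ = s * r + Real.log C := by
            rw [Real.log_mul (by positivity) (Real.exp_pos _).ne', Real.log_exp, add_comm]
  · refine (hlow.and_eventually (eventually_gt_atTop 0)).mono fun r ⟨hr, hr0⟩ => ?_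
    have hpos : 0 < ‖f (r * exp (θ * I))‖ :=
      pos_of_mul_pos_right ((Real.exp_pos _).trans_le hr) (by positivity)
    rw [sub_div' hr0.ne', div_le_div_iff_of_pos_right hr0]
    have := Real.log_le_log (Real.exp_pos _) hr
    rw [Real.log_exp, Real.log_mul (by positivity) hpos.ne'] at this
    linarith

theorem indicator_sphBessel_general
    (R₀ : ℝ) (hR₀ : 0 < R₀) (l : ℕ) (θ : ℝ) :
    indic (fun k => sphBessel l (k * R₀)) θ = ((R₀ * |Real.sin θ| : ℝ) : EReal) := by
  have hray := tendsto_ofReal_mul_exp_mul_ofReal_cobounded hR₀ θ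
  refine indic_eq_of_bounds (C := 2) (K := 8 * R₀) (by positivity) one_le_two (by positivity) ?_ ?_
  · filter_upwards [hray.eventually (eventually_norm_mul_sphBessel_le l),
      hray.eventually (tendsto_norm_cobounded_atTop.eventually_ge_atTop 1),
      eventually_ge_atTop 0] with r hup hone hr0
    calc ‖sphBessel l (r * exp (θ * I) * R₀)‖
        ≤ ‖(r * exp (θ * I) * R₀) * sphBessel l (r * exp (θ * I) * R₀)‖ := by
          rw [norm_mul]; exact le_mul_of_one_le_left (norm_nonneg _) hone
      _ ≤ 2 * Real.exp (R₀ * |Real.sin θ| * r) := by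
          rwa [← abs_im_ofReal_mul_exp_mul_ofReal hr0 hR₀]
  · have hshift : ((l * π / 2 : ℝ) : ℂ) = l * π / 2 := by push_cast; ring
    refine (frequently_exp_abs_im_le_four_mul_norm_sin R₀ θ (l * π / 2) hR₀).and_eventually
      ((hray.eventually (eventually_exp_abs_im_le_norm_mul_sphBessel l)).and
        (eventually_ge_atTop 0)) |>.mono fun r ⟨hsin, hlow, hr0⟩ => ?_
    rw [hshift] at hsin
    calc Real.exp (R₀ * |Real.sin θ| * r) = Real.exp |(r * exp (θ * I) * R₀ : ℂ).im| := by
          rw [abs_im_ofReal_mul_exp_mul_ofReal hr0 hR₀]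
      _ ≤ 8 * ‖(r * exp (θ * I) * R₀) * sphBessel l (r * exp (θ * I) * R₀)‖ := hlow hsin
      _ = 8 * R₀ * r * ‖sphBessel l (r * exp (θ * I) * R₀)‖ := by
          rw [norm_mul, norm_ofReal_mul_exp_mul_ofReal hr0 hR₀]; ring

/-- Indicator of the spherical Bessel function (Lemma 3.7, first part):
. -/
theorem indicator_sphBessel
    (R₀ : ℝ) (hR₀ : 0 < R₀) (l : ℕ) (θ : ℝ) (hθ : θ ∈ Set.Icc (0:ℝ) (2 * π)) :
    indic (fun k => sphBessel l (k * R₀)) θ = ((R₀ * |Real.sin θ| : ℝ) : EReal) :=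
  indicator_sphBessel_general R₀ hR₀ l θ
end
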